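/- Let p ≥ 0, R > 0, and let α_0, …, α_p be real numbers; set g(r) = Σ_{i=0}^{p} α_i·ψ_i(r). If the k-th derivative g^{(k)}(R) = 0 for every k with 1 ≤ k ≤ p, then the (p+1)-st derivative satisfies g^{(p+1)}(R) = (−1)^{p+1} · R^{p+1} · Σ_{i=0}^{p} α_i·ψ_{p+1+i}(R). -/

import Mathlib

/-- The sequence of functions `ψ_i : ℝ → ℝ` defined inductively by
`ψ_0(r) = exp(−r)` and `ψ_{i+1}(r) = −ψ_i'(r)/r`. -/
noncomputable def psi : ℕ → ℝ → ℝ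
  | 0 => fun r => Real.exp (-r)
  | i + 1 => fun r => -(deriv (psi i) r) / r

lemma psi_contDiffOn (i : ℕ) : ContDiffOn ℝ (⊤ : ℕ∞) (psi i) (Set.Ioi 0) := by
  induction i with
  | zero => exact (Real.contDiff_exp.comp contDiff_neg).contDiffOn
  | succ i ih =>
    show ContDiffOn ℝ (⊤ : ℕ∞) (fun r => -(deriv (psi i) r) / r) (Set.Ioi 0)
    exact ((ih.deriv_of_isOpen isOpen_Ioi (mod_cast le_top)).neg).div contDiffOn_id
      (fun x hx => ne_of_gt hx)

lemma psi_diffAt {i : ℕ} {r : ℝ} (hr : 0 < r) : DifferentiableAt ℝ (psi i) r :=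
  (((psi_contDiffOn i).contDiffAt (isOpen_Ioi.mem_nhds hr)).differentiableAt (by simp))

lemma deriv_psi {i : ℕ} {r : ℝ} (hr : 0 < r) : deriv (psi i) r = -r * psi (i+1) r := by
  show deriv (psi i) r = -r * (-(deriv (psi i) r) / r)
  field_simp
open Polynomial in
noncomputable def cpoly : ℕ → ℕ → Polynomial ℝ
  | 0, 0 => 1
  | 0, _ + 1 => 0
  | k + 1, 0 => derivative (cpoly k 0)
  | k + 1, j + 1 => derivative (cpoly k (j+1)) - Polynomial.X * cpoly k j

open Polynomial

lemma cpoly_zero (k : ℕ) : cpoly (k+1) 0 = 0 := by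
  induction k with
  | zero => show derivative (cpoly 0 0) = 0; show derivative 1 = 0; simp
  | succ k ih => show derivative (cpoly (k+1) 0) = 0; rw [ih]; simp

lemma cpoly_eq_zero : ∀ k j, k < j → cpoly k j = 0 := by
  intro k
  induction k with
  | zero => intro j hj; match j, hj with
            | j + 1, _ => rfl
  | succ k ih =>
    intro j hj
    match j, hj with
    | j + 1, hj =>
      show derivative (cpoly k (j+1)) - Polynomial.X * cpoly k j = 0
      rw [ih (j+1) (by omega), ih j (by omega)]; simp

lemma cpoly_diag (k : ℕ) : cpoly k k = (-Polynomial.X) ^ k := by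
  induction k with
  | zero => rfl
  | succ k ih =>
    show derivative (cpoly k (k+1)) - Polynomial.X * cpoly k k = _
    rw [cpoly_eq_zero k (k+1) (by omega), ih]
    simp [pow_succ]
    ring

noncomputable def hfun (p : ℕ) (α : Fin (p+1) → ℝ) (j : ℕ) (r : ℝ) : ℝ :=
  ∑ i : Fin (p + 1), α i * psi (j + (i : ℕ)) r

lemma hasDerivAt_hfun (p : ℕ) (α : Fin (p+1) → ℝ) (j : ℕ) {r : ℝ} (hr : 0 < r) :
    HasDerivAt (hfun p α j) (-r * hfun p α (j+1) r) r := by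
  have H : HasDerivAt (hfun p α j)
      (∑ i : Fin (p+1), α i * (-r * psi (j + (i:ℕ) + 1) r)) r := by
    apply HasDerivAt.fun_sum
    intro i _
    have h1 := (psi_diffAt (i := j + (i:ℕ)) hr).hasDerivAt
    rw [deriv_psi hr] at h1
    exact h1.const_mul (α i)
  convert H using 1
  rw [hfun, Finset.mul_sum]
  apply Finset.sum_congr rfl
  intro i _
  have : j + 1 + (i:ℕ) = j + (i:ℕ) + 1 := by omega
  rw [this]; ring

lemma key (p : ℕ) (α : Fin (p+1) → ℝ) :
    ∀ k : ℕ, ∀ r ∈ Set.Ioi (0:ℝ),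
      iteratedDeriv k (hfun p α 0) r
        = ∑ j ∈ Finset.range (k+1), (cpoly k j).eval r * hfun p α j r := by
  intro k
  induction k with
  | zero =>
    intro r hr
    simp [iteratedDeriv_zero, cpoly]
  | succ k ih =>
    intro r hr
    rw [iteratedDeriv_succ]
    have hev : iteratedDeriv k (hfun p α 0)
        =ᶠ[nhds r] (fun x => ∑ j ∈ Finset.range (k+1), (cpoly k j).eval x * hfun p α j x) := by
      filter_upwards [isOpen_Ioi.mem_nhds hr] with x hx using ih x hx
    rw [hev.deriv_eq]
    have HD : HasDerivAt
        (fun x => ∑ j ∈ Finset.range (k+1), (cpoly k j).eval x * hfun p α j x)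
        (∑ j ∈ Finset.range (k+1),
          ((Polynomial.derivative (cpoly k j)).eval r * hfun p α j r
            + (cpoly k j).eval r * (-r * hfun p α (j+1) r))) r := by
      apply HasDerivAt.fun_sum
      intro j _
      exact ((cpoly k j).hasDerivAt r).mul (hasDerivAt_hfun p α j hr)
    rw [HD.deriv]
    have expand : ∀ j : ℕ, (cpoly (k+1) (j+1)).eval r
        = (Polynomial.derivative (cpoly k (j+1))).eval r - r * (cpoly k j).eval r := by
      intro j
      show ((Polynomial.derivative (cpoly k (j+1)) - Polynomial.X * cpoly k j)).eval r = _
      simp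
    rw [Finset.sum_add_distrib]
    rw [Finset.sum_range_succ' (fun j => (cpoly (k+1) j).eval r * hfun p α j r) (k+1)]
    rw [Finset.sum_range_succ' (fun j => (Polynomial.derivative (cpoly k j)).eval r * hfun p α j r) k]
    have hA : (∑ j ∈ Finset.range k,
          (Polynomial.derivative (cpoly k (j+1))).eval r * hfun p α (j+1) r)
        = ∑ j ∈ Finset.range (k+1),
          (Polynomial.derivative (cpoly k (j+1))).eval r * hfun p α (j+1) r := by
      rw [Finset.sum_range_succ, cpoly_eq_zero k (k+1) (by omega)]
      simp
    rw [hA]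
    have ht : (cpoly (k+1) 0).eval r * hfun p α 0 r
        = (Polynomial.derivative (cpoly k 0)).eval r * hfun p α 0 r := rfl
    rw [ht]
    have hmain : (∑ j ∈ Finset.range (k+1),
          (Polynomial.derivative (cpoly k (j+1))).eval r * hfun p α (j+1) r)
        + (∑ j ∈ Finset.range (k+1), (cpoly k j).eval r * (-r * hfun p α (j+1) r))
        = ∑ j ∈ Finset.range (k+1), (cpoly (k+1) (j+1)).eval r * hfun p α (j+1) r := by
      rw [← Finset.sum_add_distrib]
      apply Finset.sum_congr rfl
      intro j _
      rw [expand j]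
      ring
    linarith [hmain]

theorem high_deriv_formula (p : ℕ) (R : ℝ) (hR : 0 < R) (α : Fin (p + 1) → ℝ)
    (hvanish : ∀ k : ℕ, 1 ≤ k → k ≤ p →
      iteratedDeriv k (fun r => ∑ i : Fin (p + 1), α i * psi i r) R = 0) :
    iteratedDeriv (p + 1) (fun r => ∑ i : Fin (p + 1), α i * psi i r) R
      = (-1 : ℝ) ^ (p + 1) * R ^ (p + 1) * ∑ i : Fin (p + 1), α i * psi (p + 1 + (i : ℕ)) R := by
  have hg : (fun r => ∑ i : Fin (p + 1), α i * psi i r) = hfun p α 0 := by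
    funext r; simp [hfun]
  rw [hg] at hvanish ⊢
  have hvanish' : ∀ j : ℕ, 1 ≤ j → j ≤ p → hfun p α j R = 0 := by
    intro j
    induction j using Nat.strong_induction_on with
    | _ j IH =>
      intro hj1 hjp
      have hk := key p α j R (Set.mem_Ioi.mpr hR)
      rw [hvanish j hj1 hjp] at hk
      have hs : ∑ m ∈ Finset.range (j+1), (cpoly j m).eval R * hfun p α m R
          = (cpoly j j).eval R * hfun p α j R := by
        apply Finset.sum_eq_single_of_mem j (Finset.self_mem_range_succ j)
        intro m hm hmne
        have hml : m < j := by
          have := Finset.mem_range.mp hm; omega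
        match m, hml with
        | 0, _ =>
          obtain ⟨j', rfl⟩ : ∃ j', j = j' + 1 := ⟨j - 1, by omega⟩
          rw [cpoly_zero]; simp
        | m' + 1, hml =>
          rw [IH (m'+1) hml (by omega) (by omega)]
          ring
      rw [hs, cpoly_diag] at hk
      have hne : ((-Polynomial.X : Polynomial ℝ) ^ j).eval R ≠ 0 := by
        simp only [Polynomial.eval_pow, Polynomial.eval_neg, Polynomial.eval_X]
        exact pow_ne_zero _ (by linarith)
      have := hk.symm
      rcases mul_eq_zero.mp this with h | h
      · exact absurd h hne
      · exact h
  have hk := key p α (p+1) R (Set.mem_Ioi.mpr hR)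
  have hs : ∑ m ∈ Finset.range (p+2), (cpoly (p+1) m).eval R * hfun p α m R
      = (cpoly (p+1) (p+1)).eval R * hfun p α (p+1) R := by
    apply Finset.sum_eq_single_of_mem (p+1) (by simp)
    intro m hm hmne
    have hml : m < p + 1 := by
      have := Finset.mem_range.mp hm; omega
    match m, hml with
    | 0, _ => rw [cpoly_zero]; simp
    | m' + 1, hml =>
      rw [hvanish' (m'+1) (by omega) (by omega)]
      ring
  rw [hk, hs, cpoly_diag]
  simp only [Polynomial.eval_pow, Polynomial.eval_neg, Polynomial.eval_X]
  rw [show hfun p α (p+1) R = ∑ i : Fin (p + 1), α i * psi (p + 1 + (i:ℕ)) R from rfl]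
  rw [neg_pow]
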